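/- arXiv:1011.4591 — 5 statements merged into one kernel-verified Lean document; each statement's English description precedes it below -/
import Mathlib

section
/- Let τ ∈ ℂ with Im τ > 0, A ∈ GL_n(ℂ) and B ∈ GL_m(ℂ). Assume that for every eigenvalue α of A, every eigenvalue β of B, and every k ∈ ℤ, one has α ≠ β·exp(2πikτ). Then every holomorphic function Φ : ℂ → Mat_{m×n}(ℂ) satisfying Φ(z+1) = Φ(z) and Φ(z+τ)·A = B·Φ(z) for all z ∈ ℂ is identically zero. -/
/-!
Put `L X = B X A⁻¹`, so that `Φ (z + τ) = L (Φ z)`. If `B X = γ X A` with `X ≠ 0`, then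
`γ α ∈ σ B` for some `α ∈ σ A`; hence no eigenvalue of `L` is a multiplier
`exp (2πikτ)`.

For an entire `f` with `f (z + 1) = f z` and `f (z + τ) = γ f z`, the function
`exp (2πicz) f z`, with `c` real chosen so that `|exp (2πicτ) γ| = 1`, has doubly periodic
norm, so it is constant by Liouville. Thus `f` is a multiple of `exp (-2πicz)`; `1`-periodicity
makes `-c` an integer `k`, and then `γ = exp (2πikτ)` unless `f = 0`.

For `Φ`, induct on an `L`-invariant subspace `W` containing the values: if `γ` is an eigenvalue
of `L` on `W`, then `Φ (z + τ) - γ Φ z = (L - γ) (Φ z)` lies in the proper subspace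
`(L - γ) W`, hence vanishes; then `Φ (z + τ) = γ Φ z` and the scalar argument gives `Φ = 0`.
-/

open Complex Matrix
open scoped TensorProduct

noncomputable section

def πc : ℂ := Real.pi

open Function Polynomial

theorem linearIndependent_one_of_im_ne_zero {τ : ℂ} (hτ : τ.im ≠ 0) :
    LinearIndependent ℝ ![1, τ] := by
  refine LinearIndependent.pair_iff.mpr fun s t h => ?_
  have ht : t = 0 := by simpa [hτ] using congrArg Complex.im h
  subst ht
  simpa using h

theorem isCompact_range_of_periodic_of_periodic {F : Type*} [TopologicalSpace F] {τ : ℂ}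
    (hτ : τ.im ≠ 0) {f : ℂ → F} (hf : Continuous f) (h1 : Periodic f 1) (h2 : Periodic f τ) :
    IsCompact (Set.range f) := by
  let Λ : PeriodPair := ⟨1, τ, linearIndependent_one_of_im_ne_zero hτ⟩
  refine IsZLattice.isCompact_range_of_periodic Λ.lattice f hf fun z w hw => ?_
  obtain ⟨a, b, rfl⟩ := PeriodPair.mem_lattice.mp hw
  rw [← add_assoc]
  exact (h2.int_mul b _).trans (h1.int_mul a z)

theorem Differentiable.apply_eq_apply_of_norm_periodic {E : Type*} [NormedAddCommGroup E]
    [NormedSpace ℂ E] {τ : ℂ} (hτ : τ.im ≠ 0) {g : ℂ → E} (hg : Differentiable ℂ g)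
    (h1 : Periodic (‖g ·‖) 1) (h2 : Periodic (‖g ·‖) τ) (z w : ℂ) : g z = g w := by
  refine hg.apply_eq_apply_of_bounded ?_ z w
  obtain ⟨C, hC⟩ := (isCompact_range_of_periodic_of_periodic hτ hg.continuous.norm h1 h2).bddAbove
  exact isBounded_iff_forall_norm_le.mpr ⟨C, by rintro _ ⟨z, rfl⟩; exact hC ⟨z, rfl⟩⟩

theorem eq_zero_of_periodic_of_add_eq_smul {E : Type*} [NormedAddCommGroup E]
    [NormedSpace ℂ E] {τ : ℂ} (hτ : τ.im ≠ 0) {γ : ℂ}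
    (hγ : ∀ k : ℤ, γ ≠ exp (2 * πc * I * k * τ)) {f : ℂ → E} (hf : Differentiable ℂ f)
    (h1 : Periodic f 1) (h2 : ∀ z, f (z + τ) = γ • f z) : f = 0 := by
  rcases eq_or_ne γ 0 with rfl | hγ0
  · funext z
    simpa using h2 (z - τ)
  obtain ⟨c, hc⟩ : ∃ c : ℝ, 2 * Real.pi * c * τ.im = Real.log ‖γ‖ :=
    ⟨Real.log ‖γ‖ / (2 * Real.pi * τ.im), by field_simp⟩
  set u : ℂ := 2 * πc * I * c
  set g : ℂ → E := fun z => exp (u * z) • f z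
  have hg : Differentiable ℂ g := by fun_prop
  have hg_add : ∀ z w, g (z + w) = exp (u * w) • exp (u * z) • f (z + w) := fun z w => by
    simp only [g, smul_smul, ← exp_add, mul_add, add_comm]
  have hu1 : ‖exp u‖ = 1 := by simp [u, πc, norm_exp]
  have huτ : ‖exp (u * τ)‖ * ‖γ‖ = 1 := by
    have : (u * τ).re = -Real.log ‖γ‖ := by simp [u, πc, ← hc]
    rw [norm_exp, this, Real.exp_neg, Real.exp_log (norm_pos_iff.mpr hγ0),
      inv_mul_cancel₀ (norm_ne_zero_iff.mpr hγ0)]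
  have hg1 : Periodic (‖g ·‖) 1 := fun z => by
    show ‖g (z + 1)‖ = ‖g z‖
    rw [hg_add, h1 z, norm_smul, mul_one, hu1, one_mul]
  have hgτ : Periodic (‖g ·‖) τ := fun z => by
    show ‖g (z + τ)‖ = ‖g z‖
    rw [hg_add, h2 z, smul_comm _ γ, norm_smul, norm_smul, ← mul_assoc, huτ, one_mul]
  have hf_eq : ∀ z, f z = exp (-(u * z)) • f 0 := fun z => by
    have := hg.apply_eq_apply_of_norm_periodic hτ hg1 hgτ z 0
    simp only [g, mul_zero, exp_zero, one_smul] at this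
    rw [← this, smul_smul, ← exp_add, neg_add_cancel, exp_zero, one_smul]
  by_contra hf_ne
  have hf0 : f 0 ≠ 0 := fun h => hf_ne (funext fun z => by simp [hf_eq z, h])
  obtain ⟨k, hk⟩ : ∃ k : ℤ, -u = k * (2 * Real.pi * I) := by
    refine exp_eq_one_iff.mp (smul_left_injective ℂ hf0 ?_)
    have h10 := h1 0
    rw [zero_add, hf_eq 1, mul_one] at h10
    simpa using h10
  apply hγ k
  refine smul_left_injective ℂ hf0 ?_
  simp only [← h2 0, zero_add, hf_eq τ, neg_mul_eq_neg_mul, hk, πc]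
  ring_nf

theorem Module.End.map_sub_smul_lt_of_hasEigenvector {K V : Type*} [Field K] [AddCommGroup V]
    [Module K V] [FiniteDimensional K V] {L : Module.End K V} {W : Submodule K V}
    (hW : ∀ x ∈ W, L x ∈ W) {γ : K} {x : V} (hxW : x ∈ W) (hx : L.HasEigenvector γ x) :
    W.map (L - γ • 1) < W := by
  have hNW : ∀ y ∈ W, (L - γ • 1) y ∈ W := fun y hy => W.sub_mem (hW y hy) (W.smul_mem γ hy)
  refine lt_of_le_of_ne (Submodule.map_le_iff_le_comap.mpr hNW) fun heq => hx.2 ?_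
  have hsurj : Surjective ((L - γ • 1).restrict hNW) := fun y => by
    obtain ⟨w, hw, hwy⟩ : (y : V) ∈ W.map (L - γ • 1) := by rw [heq]; exact y.2
    exact ⟨⟨w, hw⟩, Subtype.ext hwy⟩
  have := LinearMap.injective_iff_surjective.mpr hsurj (a₁ := ⟨x, hxW⟩) (a₂ := 0) ?_
  · simpa using this
  ext
  simp [hx.apply_eq_smul]

theorem eq_zero_of_periodic_of_add_eq_apply_of_mem {V : Type*} [NormedAddCommGroup V]
    [NormedSpace ℂ V] [FiniteDimensional ℂ V] {τ : ℂ} (hτ : τ.im ≠ 0) {L : Module.End ℂ V}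
    (hL : ∀ γ, L.HasEigenvalue γ → ∀ k : ℤ, γ ≠ exp (2 * πc * I * k * τ))
    {W : Submodule ℂ V} (hW : ∀ x ∈ W, L x ∈ W) {F : ℂ → V} (hFW : ∀ z, F z ∈ W)
    (hF : Differentiable ℂ F) (h1 : Periodic F 1) (h2 : ∀ z, F (z + τ) = L (F z)) : F = 0 := by
  induction W using WellFoundedLT.induction generalizing F with
  | ind W ih =>
  rcases subsingleton_or_nontrivial W with hW0 | hW0
  · funext z
    simpa using congrArg Subtype.val (Subsingleton.elim (⟨F z, hFW z⟩ : W) 0)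
  obtain ⟨γ, hγ⟩ := Module.End.exists_eigenvalue (L.restrict hW)
  obtain ⟨⟨x, hxW⟩, hx⟩ := hγ.exists_hasEigenvector
  have hxL : L.HasEigenvector γ x :=
    ⟨by simpa using congrArg Subtype.val hx.apply_eq_smul, by simpa using hx.2⟩
  set N := L - γ • 1
  have hN : ∀ y ∈ W.map N, L y ∈ W.map N := by
    rintro _ ⟨w, hw, rfl⟩
    exact ⟨L w, hW w hw, by simp [N]⟩
  have hG : (fun z => F (z + τ) - γ • F z) = 0 :=
    ih _ (Module.End.map_sub_smul_lt_of_hasEigenvector hW hxW hxL) hN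
      (fun z => ⟨F z, hFW z, by simp [h2]⟩) (by fun_prop)
      (fun z => by simp [add_right_comm z 1 τ, h1 _]) (fun z => by simp [h2])
  exact eq_zero_of_periodic_of_add_eq_smul hτ
    (hL γ (Module.End.hasEigenvalue_of_hasEigenvector hxL)) hF h1
    fun z => sub_eq_zero.mp (congrFun hG z)

theorem Matrix.nonempty_of_ne_zero {α m n : Type*} [Zero α] {X : Matrix m n α} (hX : X ≠ 0) :
    Nonempty n := by
  by_contra hn
  exact hX (Matrix.ext fun _ j => absurd ⟨j⟩ hn)

theorem Matrix.aeval_mul_eq_mul_aeval_of_mul_eq_mul {K m n : Type*} [CommRing K] [Fintype m]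
    [DecidableEq m] [Fintype n] [DecidableEq n] {B : Matrix m m K} {C : Matrix n n K}
    {X : Matrix m n K} (h : B * X = X * C) (p : K[X]) :
    aeval B p * X = X * aeval C p := by
  induction p using Polynomial.induction_on' with
  | add p q hp hq => rw [map_add, map_add, Matrix.add_mul, Matrix.mul_add, hp, hq]
  | monomial k a =>
    have hpow : B ^ k * X = X * C ^ k := by
      induction k with
      | zero => simp
      | succ k ih => rw [pow_succ, pow_succ, Matrix.mul_assoc, h, ← Matrix.mul_assoc, ih,
          Matrix.mul_assoc]
    simp only [aeval_monomial, Algebra.algebraMap_eq_smul_one, smul_mul_assoc, one_mul,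
      Matrix.smul_mul, Matrix.mul_smul, hpow]

theorem Matrix.exists_mem_spectrum_of_mul_eq_mul {K m n : Type*} [Field K] [IsAlgClosed K]
    [Fintype m] [DecidableEq m] [Fintype n] [DecidableEq n] {B : Matrix m m K}
    {C : Matrix n n K} {X : Matrix m n K} (hX : X ≠ 0) (h : B * X = X * C) :
    ∃ μ ∈ spectrum K B, μ ∈ spectrum K C := by
  have := nonempty_of_ne_zero hX
  have hdeg : 0 < C.charpoly.degree := by
    rw [charpoly_degree_eq_dim]
    exact_mod_cast Fintype.card_pos
  -- by Cayley–Hamilton, `χ_C(B) X = X χ_C(C) = 0`, so `χ_C(B)` is singular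
  have hsing : 0 ∈ spectrum K (aeval B C.charpoly) := by
    refine (spectrum.zero_mem_iff K).mpr fun hu => hX ?_
    have := hu.invertible
    refine mul_right_injective_of_invertible (aeval B C.charpoly) ?_
    dsimp only
    rw [aeval_mul_eq_mul_aeval_of_mul_eq_mul h, aeval_self_charpoly, Matrix.mul_zero,
      Matrix.mul_zero]
  rw [spectrum.map_polynomial_aeval_of_degree_pos B _ hdeg] at hsing
  obtain ⟨μ, hμ, hroot⟩ := hsing
  exact ⟨μ, hμ, mem_spectrum_iff_isRoot_charpoly.mpr hroot⟩

theorem Matrix.exists_mul_mem_spectrum_of_hasEigenvalue {K m n : Type*} [Field K]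
    [IsAlgClosed K] [Fintype m] [DecidableEq m] [Fintype n] [DecidableEq n]
    {A : Matrix n n K} (hA : IsUnit A) {B : Matrix m m K} {γ : K}
    (hγ : Module.End.HasEigenvalue (mulLeftLinearMap n K B ∘ₗ mulRightLinearMap m K A⁻¹) γ) :
    ∃ α ∈ spectrum K A, γ * α ∈ spectrum K B := by
  obtain ⟨X, hX⟩ := hγ.exists_hasEigenvector
  have hBX : B * X = X * (γ • A) := by
    have := congrArg (· * A) hX.apply_eq_smul
    simpa [Matrix.mul_assoc, nonsing_inv_mul _ ((isUnit_iff_isUnit_det A).mp hA)] using this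
  obtain ⟨μ, hμB, hμA⟩ := exists_mem_spectrum_of_mul_eq_mul hX.2 hBX
  have := nonempty_of_ne_zero hX.2
  rw [spectrum.smul_eq_smul _ _ (spectrum.nonempty_of_isAlgClosed_of_finiteDimensional K A)]
    at hμA
  obtain ⟨α, hα, rfl⟩ := hμA
  exact ⟨α, hα, hμB⟩

attribute [local instance] Matrix.normedAddCommGroup Matrix.normedSpace

theorem hom_vanishing_general (n m : ℕ) (τ : ℂ) (hτ : 0 < τ.im)
    (A : Matrix (Fin n) (Fin n) ℂ) (hA : IsUnit A)
    (B : Matrix (Fin m) (Fin m) ℂ)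
    (hspec : ∀ α ∈ spectrum ℂ A, ∀ β ∈ spectrum ℂ B, ∀ k : ℤ,
      α ≠ β * Complex.exp (2 * πc * I * (k : ℂ) * τ))
    (Φ : ℂ → Matrix (Fin m) (Fin n) ℂ)
    (hdiff : ∀ i j, Differentiable ℂ fun z => Φ z i j)
    (hper : ∀ z, Φ (z + 1) = Φ z)
    (hqp : ∀ z, Φ (z + τ) * A = B * Φ z) :
    Φ = 0 := by
  set L := mulLeftLinearMap (Fin n) ℂ B ∘ₗ mulRightLinearMap (Fin m) ℂ A⁻¹
  have hL : ∀ γ, Module.End.HasEigenvalue L γ → ∀ k : ℤ, γ ≠ exp (2 * πc * I * k * τ) := by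
    rintro γ hγ k rfl
    obtain ⟨α, hα, hβ⟩ := exists_mul_mem_spectrum_of_hasEigenvalue hA hγ
    have hexp : exp (2 * πc * I * k * τ) * exp (2 * πc * I * (-k : ℤ) * τ) = 1 := by
      rw [← exp_add, ← exp_zero]
      push_cast
      ring_nf
    exact hspec α hα _ hβ (-k) (by linear_combination -α * hexp)
  have hΦ : Differentiable ℂ Φ := differentiable_pi.mpr fun i => differentiable_pi.mpr (hdiff i)
  have hτΦ : ∀ z, Φ (z + τ) = L (Φ z) := fun z => by
    rw [LinearMap.comp_apply, mulRightLinearMap_apply, mulLeftLinearMap_apply,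
      ← Matrix.mul_assoc, ← hqp z, Matrix.mul_assoc,
      mul_nonsing_inv _ ((isUnit_iff_isUnit_det A).mp hA), Matrix.mul_one]
  exact eq_zero_of_periodic_of_add_eq_apply_of_mem hτ.ne' hL (W := ⊤) (fun _ _ => trivial)
    (fun _ => trivial) hΦ hper hτΦ

/-- If no eigenvalue of A equals an eigenvalue of B times exp(2πikτ), then every holomorphic
Φ with Φ(z+1) = Φ(z) and Φ(z+τ)·A = B·Φ(z) vanishes identically. -/
theorem hom_vanishing (n m : ℕ) (τ : ℂ) (hτ : 0 < τ.im)
    (A : Matrix (Fin n) (Fin n) ℂ) (hA : IsUnit A)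
    (B : Matrix (Fin m) (Fin m) ℂ) (hB : IsUnit B)
    (hspec : ∀ α ∈ spectrum ℂ A, ∀ β ∈ spectrum ℂ B, ∀ k : ℤ,
      α ≠ β * Complex.exp (2 * πc * I * (k : ℂ) * τ))
    (Φ : ℂ → Matrix (Fin m) (Fin n) ℂ)
    (hdiff : ∀ i j, Differentiable ℂ fun z => Φ z i j)
    (hper : ∀ z, Φ (z + 1) = Φ z)
    (hqp : ∀ z, Φ (z + τ) * A = B * Φ z) :
    Φ = 0 :=
  hom_vanishing_general n m τ hτ A hA B hspec Φ hdiff hper hqp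
end
end

section
/- Let τ ∈ ℂ with Im τ > 0 and φ(z) = exp(−πiτ − 2πiz). Then the complex vector space V = {f : ℂ → ℂ holomorphic : f(z+1) = f(z) and f(z+τ) = φ(z)·f(z) for all z ∈ ℂ} is one-dimensional and is spanned by the third Jacobi theta function θ̄(z) = Σ_{n∈ℤ} exp(πin²τ + 2πinz); i.e. θ̄ ∈ V, θ̄ ≠ 0, and every f ∈ V is a complex scalar multiple of θ̄. -/
/-!
For `f` in the space, the Fourier coefficients `c n = ∫₀¹ e^{-2πint} f t dt` of the 1-periodic
entire function `f` satisfy `c (n + 1) = e^{πi(2n+1)τ} c n`: moving the segment `[0, 1]` to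
`[τ, τ + 1]` (Cauchy's theorem, the vertical sides cancelling by periodicity) multiplies `c n` by
`e^{2πinτ}`, while the functional equation turns `f (· + τ)` into `e^{-πiτ} e^{-2πiz} f`, whose
coefficients are those of `f` shifted by one. Hence `c n = e^{πin²τ} c 0`, and the same holds for
`θ̄`, whose constant coefficient is `1` by termwise integration. So `f - c 0 • θ̄` has vanishing
Fourier coefficients, and so do all its translates; by uniqueness of Fourier series on the circle
it vanishes.
-/

open Complex Matrix
open scoped TensorProduct

noncomputable section

/-- First Jacobi theta function θ₁(z|τ) = 2q^{1/4} Σ_{m≥0} (−1)^m q^{m(m+1)} sin((2m+1)πz),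
with q = exp(πiτ). -/
def theta1 (τ z : ℂ) : ℂ :=
  2 * Complex.exp (πc * I * τ / 4) *
    ∑' m : ℕ, (-1 : ℂ) ^ m * Complex.exp (πc * I * τ * (m * (m + 1))) *
      Complex.sin ((2 * (m : ℂ) + 1) * πc * z)

/-- Third Jacobi theta function θ₃(z|τ) = Σ_{m∈ℤ} exp(πim²τ + 2πimz). -/
def theta3 (τ z : ℂ) : ℂ :=
  ∑' m : ℤ, Complex.exp (πc * I * (m : ℂ) ^ 2 * τ + 2 * πc * I * (m : ℂ) * z)

/-- The Kronecker function σ(u,x) = θ'(0)θ(u+x)/(θ(u)θ(x)). -/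
def kron (τ u x : ℂ) : ℂ :=
  deriv (theta1 τ) 0 * theta1 τ (u + x) / (theta1 τ u * theta1 τ x)

/-- The space of holomorphic functions f with f(z+1) = f(z) and f(z+τ) = φ(z)·f(z). -/
def Vsp (τ : ℂ) (φ : ℂ → ℂ) : Submodule ℂ (ℂ → ℂ) where
  carrier := {f | Differentiable ℂ f ∧ (∀ z, f (z + 1) = f z) ∧ ∀ z, f (z + τ) = φ z * f z}
  add_mem' := by
    rintro f g ⟨hd, hp, hq⟩ ⟨gd, gp, gq⟩
    refine ⟨hd.add gd, fun z => ?_, fun z => ?_⟩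
    · show f (z + 1) + g (z + 1) = f z + g z
      rw [hp, gp]
    · show f (z + τ) + g (z + τ) = φ z * (f z + g z)
      rw [hq, gq, mul_add]
  zero_mem' := ⟨differentiable_const 0, fun z => rfl, fun z => by simp⟩
  smul_mem' := by
    rintro a f ⟨hd, hp, hq⟩
    refine ⟨hd.const_smul a, fun z => ?_, fun z => ?_⟩
    · show a • f (z + 1) = a • f z
      rw [hp]
    · show a • f (z + τ) = φ z * (a • f z)
      rw [hq, smul_eq_mul, smul_eq_mul, mul_left_comm]

open MeasureTheory Function

section UnitFourierCoeff

variable {f g : ℂ → ℂ}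

lemma integral_comp_add_eq_of_periodic (hf : Differentiable ℂ f) (hp : Periodic f 1) (w : ℂ) :
    ∫ t : ℝ in 0..1, f (t + w) = ∫ t : ℝ in 0..1, f t := by
  have hrect := integral_boundary_rect_eq_zero_of_differentiableOn f w.re (w.re + 1 + w.im * I)
    hf.differentiableOn
  have hvert : ∀ y : ℝ, f (↑(w.re + 1) + y * I) = f (↑w.re + y * I) := fun y => by
    rw [ofReal_add, ofReal_one, add_right_comm]; exact hp _
  simp only [ofReal_re, ofReal_im, add_re, add_im, mul_re, mul_im, I_re, I_im, one_re, one_im,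
    ofReal_zero, zero_mul, add_zero, mul_zero, mul_one, zero_add, hvert, sub_self] at hrect
  have hreal : Periodic (fun t : ℝ => f t) 1 := fun t => by simpa using hp t
  calc ∫ t : ℝ in 0..1, f (t + w)
      = ∫ t : ℝ in 0..1, f (↑(t + w.re) + w.im * I) := by
        refine intervalIntegral.integral_congr fun t _ => ?_
        conv_lhs => rw [← re_add_im w]
        push_cast
        ring_nf
    _ = ∫ x : ℝ in w.re..w.re + 1, f (x + w.im * I) := by
        rw [intervalIntegral.integral_comp_add_right (fun x : ℝ => f (x + w.im * I)), zero_add,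
          add_comm]
    _ = ∫ x : ℝ in w.re..w.re + 1, f x := by linear_combination -hrect
    _ = ∫ t : ℝ in 0..1, f t := by simpa using hreal.intervalIntegral_add_eq w.re 0

lemma exp_two_pi_I_mul_int (n : ℤ) : exp (2 * πc * I * n) = 1 := by
  simpa [πc, mul_comm, mul_left_comm, mul_assoc] using exp_int_mul_two_pi_mul_I n

def unitFourierCoeff (f : ℂ → ℂ) (n : ℤ) : ℂ :=
  ∫ t : ℝ in 0..1, exp (-2 * πc * I * n * t) * f t

lemma unitFourierCoeff_smul (a : ℂ) (n : ℤ) :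
    unitFourierCoeff (a • f) n = a * unitFourierCoeff f n := by
  rw [unitFourierCoeff, unitFourierCoeff, ← intervalIntegral.integral_const_mul]
  simp only [Pi.smul_apply, smul_eq_mul, mul_left_comm]

lemma unitFourierCoeff_sub (hf : Continuous f) (hg : Continuous g) (n : ℤ) :
    unitFourierCoeff (f - g) n = unitFourierCoeff f n - unitFourierCoeff g n := by
  rw [unitFourierCoeff, unitFourierCoeff, unitFourierCoeff, ← intervalIntegral.integral_sub]
  · simp only [Pi.sub_apply, mul_sub]
  all_goals exact Continuous.intervalIntegrable (by fun_prop) _ _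

lemma unitFourierCoeff_exp_mul (n : ℤ) :
    unitFourierCoeff (fun z => exp (-2 * πc * I * z) * f z) n = unitFourierCoeff f (n + 1) := by
  refine intervalIntegral.integral_congr fun t _ => ?_
  rw [← mul_assoc, ← exp_add]
  push_cast
  ring_nf

lemma unitFourierCoeff_comp_add (hf : Differentiable ℂ f) (hp : Periodic f 1) (n : ℤ) (w : ℂ) :
    unitFourierCoeff (fun z => f (z + w)) n = exp (2 * πc * I * n * w) * unitFourierCoeff f n := by
  set g : ℂ → ℂ := fun z => exp (-2 * πc * I * n * z) * f z
  have hg : Differentiable ℂ g := by fun_prop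
  have hgp : Periodic g 1 := fun z => by
    simp only [g]
    rw [show -2 * πc * I * n * (z + 1) = -2 * πc * I * n * z + 2 * πc * I * ↑(-n) by
      push_cast; ring, exp_add, exp_two_pi_I_mul_int, mul_one, hp]
  calc unitFourierCoeff (fun z => f (z + w)) n
      = exp (2 * πc * I * n * w) * ∫ t : ℝ in 0..1, g (t + w) := by
        rw [unitFourierCoeff, ← intervalIntegral.integral_const_mul]
        refine intervalIntegral.integral_congr fun t _ => ?_
        simp only [g, ← mul_assoc, ← exp_add]
        ring_nf
    _ = exp (2 * πc * I * n * w) * unitFourierCoeff f n := by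
        rw [integral_comp_add_eq_of_periodic hg hgp]
        rfl

lemma ofReal_eq_zero_of_unitFourierCoeff_eq_zero (hf : Continuous f) (hp : Periodic f 1)
    (h : ∀ n, unitFourierCoeff f n = 0) (x : ℝ) : f x = 0 := by
  have hreal : Periodic (fun t : ℝ => f t) 1 := fun t => by simpa using hp t
  let F : C(UnitAddCircle, ℂ) :=
    ⟨hreal.lift, continuous_coinduced_dom.mpr (hf.comp continuous_ofReal)⟩
  have hcoeff : ∀ n, fourierCoeff F n = 0 := fun n => by
    rw [fourierCoeff_eq_intervalIntegral _ n 0, ← h n, unitFourierCoeff]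
    simp only [zero_add, div_one, one_smul, F, ContinuousMap.coe_mk, Periodic.lift_coe,
      fourier_coe_apply, smul_eq_mul]
    push_cast [πc]
    ring_nf
  have hsum := has_pointwise_sum_fourier_series_of_summable
    (summable_zero.congr fun n => (hcoeff n).symm) (x : UnitAddCircle)
  simp only [hcoeff, zero_smul] at hsum
  exact (hreal.lift_coe x).symm.trans (hasSum_zero.unique hsum).symm

lemma eq_zero_of_unitFourierCoeff_eq_zero (hf : Differentiable ℂ f) (hp : Periodic f 1)
    (h : ∀ n, unitFourierCoeff f n = 0) : f = 0 := by
  funext z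
  have hz : ∀ n, unitFourierCoeff (fun u => f (u + z)) n = 0 := fun n => by
    rw [unitFourierCoeff_comp_add hf hp, h, mul_zero]
  simpa using ofReal_eq_zero_of_unitFourierCoeff_eq_zero
    (hf.continuous.comp (continuous_add_const z)) (hp.add_const z) hz 0

end UnitFourierCoeff

section Theta

variable {τ : ℂ}

lemma theta3_eq_jacobiTheta₂ (τ z : ℂ) : theta3 τ z = jacobiTheta₂ z τ := by
  refine tsum_congr fun n => ?_
  rw [jacobiTheta₂_term]
  congr 1
  push_cast [πc]
  ring

lemma theta3_mem_Vsp (hτ : 0 < τ.im) :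
    theta3 τ ∈ Vsp τ (fun z => exp (-πc * I * τ - 2 * πc * I * z)) := by
  rw [show theta3 τ = (jacobiTheta₂ · τ) from funext (theta3_eq_jacobiTheta₂ τ)]
  refine ⟨fun z => differentiableAt_jacobiTheta₂_fst z hτ, fun z => jacobiTheta₂_add_left z τ,
    fun z => ?_⟩
  simp only [jacobiTheta₂_add_left']
  congr 2
  push_cast [πc]
  ring

lemma integral_jacobiTheta₂_term (n : ℤ) (τ : ℂ) :
    ∫ t : ℝ in 0..1, jacobiTheta₂_term n t τ = if n = 0 then 1 else 0 := by
  split_ifs with hn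
  · simp [hn, jacobiTheta₂_term]
  · have hc : 2 * πc * I * n ≠ 0 := by simp [πc, hn, Real.pi_ne_zero, I_ne_zero]
    simp_rw [jacobiTheta₂_term, exp_add]
    rw [intervalIntegral.integral_mul_const]
    have := integral_exp_mul_complex (a := 0) (b := 1) hc
    simp only [ofReal_one, mul_one, exp_two_pi_I_mul_int, ofReal_zero, mul_zero, exp_zero, sub_self,
      zero_div] at this
    simpa [πc] using this

lemma unitFourierCoeff_theta3_zero (hτ : 0 < τ.im) : unitFourierCoeff (theta3 τ) 0 = 1 := by
  have hsum : HasSum (fun n : ℤ => ∫ t : ℝ in 0..1, jacobiTheta₂_term n t τ)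
      (∫ t : ℝ in 0..1, jacobiTheta₂ t τ) := by
    refine intervalIntegral.hasSum_integral_of_dominated_convergence
      (fun n _ => ‖jacobiTheta₂_term n 0 τ‖) (fun n => ?_) (fun n => ?_) ?_
      intervalIntegrable_const ?_
    · exact Continuous.aestronglyMeasurable (by unfold jacobiTheta₂_term; fun_prop)
    · exact ae_of_all _ fun t _ => by simp [norm_jacobiTheta₂_term]
    · exact ae_of_all _ fun _ _ => ((summable_jacobiTheta₂_term_iff 0 τ).mpr hτ).norm
    · exact ae_of_all _ fun t _ => hasSum_jacobiTheta₂_term t hτ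
  simp_rw [integral_jacobiTheta₂_term] at hsum
  simpa [unitFourierCoeff, theta3_eq_jacobiTheta₂] using ((hasSum_ite_eq 0 1).unique hsum).symm

end Theta

section QuasiPeriodic

variable {τ : ℂ} {f : ℂ → ℂ}

lemma unitFourierCoeff_add_one_of_mem_Vsp
    (hf : f ∈ Vsp τ (fun z => exp (-πc * I * τ - 2 * πc * I * z))) (n : ℤ) :
    unitFourierCoeff f (n + 1) = exp (πc * I * (2 * n + 1) * τ) * unitFourierCoeff f n := by
  obtain ⟨hd, hp, hq⟩ := hf
  have hshift : (fun z => f (z + τ)) =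
      exp (-πc * I * τ) • fun z => exp (-2 * πc * I * z) * f z := by
    funext z
    rw [hq, Pi.smul_apply, smul_eq_mul, ← mul_assoc, ← exp_add]
    ring_nf
  have h := unitFourierCoeff_comp_add hd hp n τ
  rw [hshift, unitFourierCoeff_smul, unitFourierCoeff_exp_mul] at h
  calc unitFourierCoeff f (n + 1)
      = exp (πc * I * τ) * (exp (-πc * I * τ) * unitFourierCoeff f (n + 1)) := by
        rw [← mul_assoc, ← exp_add, neg_mul, neg_mul, add_neg_cancel, exp_zero, one_mul]
    _ = exp (πc * I * (2 * n + 1) * τ) * unitFourierCoeff f n := by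
        rw [h, ← mul_assoc, ← exp_add]
        ring_nf

lemma unitFourierCoeff_eq_of_mem_Vsp
    (hf : f ∈ Vsp τ (fun z => exp (-πc * I * τ - 2 * πc * I * z))) (n : ℤ) :
    unitFourierCoeff f n = exp (πc * I * n ^ 2 * τ) * unitFourierCoeff f 0 := by
  have hper : Periodic (fun m : ℤ => exp (-(πc * I * m ^ 2 * τ)) * unitFourierCoeff f m) 1 :=
    fun m => by
      simp only
      rw [unitFourierCoeff_add_one_of_mem_Vsp hf, ← mul_assoc, ← exp_add]
      push_cast
      ring_nf
  have h := hper.int_mul_eq n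
  simp only [mul_one, Int.cast_id, Int.cast_zero, ne_eq, OfNat.ofNat_ne_zero, not_false_eq_true,
    zero_pow, mul_zero, zero_mul, neg_zero, exp_zero, one_mul] at h
  rw [← h, ← mul_assoc, ← exp_add, add_neg_cancel, exp_zero, one_mul]

end QuasiPeriodic

/-- The space of holomorphic functions with f(z+1) = f(z), f(z+τ) = exp(−πiτ−2πiz)f(z) is
one-dimensional, spanned by the third Jacobi theta function. -/
theorem theta3_spans (τ : ℂ) (hτ : 0 < τ.im) :
    theta3 τ ∈ Vsp τ (fun z => Complex.exp (-πc * I * τ - 2 * πc * I * z)) ∧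
    theta3 τ ≠ 0 ∧
    ∀ f ∈ Vsp τ (fun z => Complex.exp (-πc * I * τ - 2 * πc * I * z)),
      ∃ c : ℂ, f = c • theta3 τ := by
  have hθ := theta3_mem_Vsp hτ
  refine ⟨hθ, fun h => ?_, fun f hf => ⟨unitFourierCoeff f 0, ?_⟩⟩
  · simpa [h, unitFourierCoeff] using unitFourierCoeff_theta3_zero hτ
  · set c := unitFourierCoeff f 0
    have hg := sub_mem hf (Submodule.smul_mem _ c hθ)
    have hg0 : unitFourierCoeff (f - c • theta3 τ) 0 = 0 := by
      rw [unitFourierCoeff_sub hf.1.continuous (hθ.1.const_smul c).continuous,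
        unitFourierCoeff_smul, unitFourierCoeff_theta3_zero hτ, mul_one, sub_self]
    refine sub_eq_zero.mp (eq_zero_of_unitFourierCoeff_eq_zero hg.1 hg.2.1 fun n => ?_)
    rw [unitFourierCoeff_eq_of_mem_Vsp hg, hg0, mul_zero]
end
end

section
/- Let n ≥ 1 and let N ∈ Mat_{n²×n²}(ℂ) be the block matrix built from the blocks A₀, …, A_{n−1} as in the definition below. Then N is nilpotent; more precisely N^{2n−1} = 0. -/
open Complex Matrix
open scoped TensorProduct

noncomputable section

/-- The blocks of the matrix N: A₀ is the strictly lower-triangular Toeplitz matrix with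
entries a_{i−j} = (−1)^{i−j}/(i−j) below the diagonal, and A_k = −a_k·Id for k ≥ 1. -/
def Ablock (n : ℕ) (k : ℕ) : Matrix (Fin n) (Fin n) ℂ :=
  if k = 0 then
    Matrix.of fun i j : Fin n =>
      if (j : ℕ) < (i : ℕ) then
        (-1 : ℂ) ^ ((i : ℕ) - (j : ℕ)) / ((((i : ℕ) - (j : ℕ) : ℕ)) : ℂ)
      else 0
  else (-((-1 : ℂ) ^ k / (k : ℂ))) • (1 : Matrix (Fin n) (Fin n) ℂ)

/-- The n²×n² block upper-triangular block-Toeplitz matrix N whose (p,q)-block equals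
A_{q−p} for q ≥ p and 0 otherwise; rows and columns are indexed by pairs
(block index, index inside the block). -/
def Nmat (n : ℕ) : Matrix (Fin n × Fin n) (Fin n × Fin n) ℂ :=
  Matrix.of fun pi qj : Fin n × Fin n =>
    if (pi.1 : ℕ) ≤ (qj.1 : ℕ) then Ablock n ((qj.1 : ℕ) - (pi.1 : ℕ)) pi.2 qj.2 else 0


/-!
Order the index pairs `(p, i)` by the weight `p + (n - 1 - i)`. Every nonzero entry of `N`
strictly raises the weight: inside a diagonal block `A₀` is strictly lower triangular, and the
blocks above the diagonal are scalar. The weight takes values in `[0, 2n - 2]`, so every product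
of `2n - 1` entries of `N` along a path vanishes.
-/

namespace Matrix

variable {ι R : Type*} [Fintype ι] [DecidableEq ι] [Semiring R]

theorem add_le_of_pow_apply_ne_zero {M : Matrix ι ι R} {f : ι → ℕ}
    (hf : ∀ i j, M i j ≠ 0 → f i < f j) (m : ℕ) {i j : ι} (h : (M ^ m) i j ≠ 0) :
    f i + m ≤ f j := by
  induction m generalizing j with
  | zero =>
    obtain rfl : i = j := by_contra fun hij => h (one_apply_ne hij)
    simp
  | succ m ih =>
    rw [pow_succ, mul_apply] at h
    obtain ⟨k, -, hk⟩ := Finset.exists_ne_zero_of_sum_ne_zero h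
    have hik := ih (left_ne_zero_of_mul hk)
    have hkj := hf k j (right_ne_zero_of_mul hk)
    omega

theorem pow_eq_zero_of_apply_ne_zero_lt {M : Matrix ι ι R} {f : ι → ℕ}
    (hf : ∀ i j, M i j ≠ 0 → f i < f j) {m : ℕ} (hm : ∀ i, f i < m) : M ^ m = 0 := by
  ext i j
  by_contra h
  have := add_le_of_pow_apply_ne_zero hf m h
  have := hm j
  omega

end Matrix

theorem Ablock_zero_apply_ne_zero {n : ℕ} {i j : Fin n} (h : Ablock n 0 i j ≠ 0) :
    (j : ℕ) < i := by
  by_contra hji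
  rw [Ablock, if_pos rfl, of_apply, if_neg hji] at h
  exact h rfl

theorem Ablock_apply_ne_zero {n k : ℕ} (hk : k ≠ 0) {i j : Fin n} (h : Ablock n k i j ≠ 0) :
    i = j := by
  by_contra hij
  rw [Ablock, if_neg hk, Matrix.smul_apply, one_apply_ne hij, smul_zero] at h
  exact h rfl

theorem Nmat_apply_ne_zero {n : ℕ} {p q i j : Fin n} (h : Nmat n (p, i) (q, j) ≠ 0) :
    (p : ℕ) ≤ q ∧ Ablock n (q - p) i j ≠ 0 := by
  rw [Nmat, of_apply] at h
  split_ifs at h with hxy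
  · exact ⟨hxy, h⟩
  · exact absurd rfl h

theorem Nmat_apply_ne_zero_weight_lt {n : ℕ} {p q i j : Fin n} (h : Nmat n (p, i) (q, j) ≠ 0) :
    (p : ℕ) + i.rev < q + j.rev := by
  obtain ⟨hpq, hA⟩ := Nmat_apply_ne_zero h
  have := i.isLt
  simp only [Fin.val_rev]
  by_cases hk : (q : ℕ) - p = 0
  · rw [hk] at hA
    have := Ablock_zero_apply_ne_zero hA
    omega
  · obtain rfl := Ablock_apply_ne_zero hk hA
    omega

theorem Nmat_nilpotent_general (n : ℕ) : Nmat n ^ (2 * n - 1) = 0 :=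
  Matrix.pow_eq_zero_of_apply_ne_zero_lt (f := fun x => x.1 + x.2.rev)
    (fun _ _ => Nmat_apply_ne_zero_weight_lt) fun x => by
      have := x.1.isLt
      have := x.2.rev.isLt
      omega

/-- The matrix N is nilpotent: N^{2n−1} = 0. -/
theorem Nmat_nilpotent (n : ℕ) (hn : 1 ≤ n) : Nmat n ^ (2 * n - 1) = 0 :=
  Nmat_nilpotent_general n
end
end

section
/- Let n ≥ 1 and let J = J_n(1) ∈ GL_n(ℂ) be the Jordan block of size n with eigenvalue 1. For matrices C ∈ Mat_{n×n}(ℂ) and D ∈ GL_n(ℂ), let C ⊗ D̃ denote the n²×n² block matrix whose (i,j)-block is c_{ij}·(D⁻¹)ᵗ. Then J ⊗ J̃ = exp(N), where N ∈ Mat_{n²×n²}(ℂ) is the matrix built from the blocks A₀, …, A_{n−1} as in the definition below and exp is the matrix exponential (a finite sum since N is nilpotent). -/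
/-!
Write `J = 1 + S` with `S` the nilpotent shift. The formal identity `exp (log (1 + X)) = 1 + X`
holds because `g = exp (log (1 + X))` solves `(1 + X) g' = g`, `g(0) = 1`, whose only solution is
`1 + X`. Evaluating power series at `S` (an algebra map, since `X ^ n ↦ 0`) turns it into
`exp (log J) = J` for the truncated logarithm `log J = ∑_{k<n} (-1)^(k+1)/k • S^k`.
The matrix `N` is the Kronecker sum `log J ⊗ 1 + 1 ⊗ (-(log J)ᵀ)` of two commuting matrices, so
`exp N = exp (log J) ⊗ exp (-log J)ᵀ = J ⊗ (J⁻¹)ᵀ`.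
-/

open Complex Matrix
open scoped TensorProduct

noncomputable section

/-- The Jordan block J_n(1) (ones on the diagonal and the first superdiagonal). -/
def Jord (n : ℕ) : Matrix (Fin n) (Fin n) ℂ :=
  Matrix.of fun i j : Fin n => if i = j ∨ (j : ℕ) = (i : ℕ) + 1 then 1 else 0

open scoped Kronecker

open PowerSeries

namespace PowerSeries

section Log

variable {A : Type*} [CommRing A] [Algebra ℚ A]

theorem eq_zero_of_one_add_X_mul_derivative_eq_self {f : A⟦X⟧}
    (hf : (1 + X) * d⁄dX A f = f) (h0 : constantCoeff f = 0) : f = 0 := by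
  ext k
  induction k with
  | zero => simpa using h0
  | succ k ih =>
    -- coefficient `k` of the equation reads `(k + 1) f_{k+1} + k f_k = f_k`
    have hk := congrArg (coeff k) hf
    have hunit : IsUnit ((k : A) + 1) := by
      simpa using (isUnit_iff_ne_zero.2 (Nat.cast_add_one_ne_zero k : (k : ℚ) + 1 ≠ 0)).map
        (algebraMap ℚ A)
    rw [map_zero] at ih ⊢
    rcases k with _ | k
    · rw [add_mul, one_mul, map_add, coeff_zero_X_mul, add_zero, coeff_derivative] at hk
      simpa [h0] using hk
    · rw [add_mul, one_mul, map_add, coeff_succ_X_mul, coeff_derivative, coeff_derivative, ih,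
        zero_mul, add_zero] at hk
      exact hunit.mul_left_eq_zero.1 hk

theorem one_add_X_mul_derivative_log : (1 + X) * d⁄dX A (log A) = 1 := by
  ext k
  rw [deriv_log, add_mul, one_mul, map_add]
  rcases k with _ | k
  · simp
  · rw [coeff_succ_X_mul]
    simp [pow_succ]

theorem exp_subst_log : (exp A).subst (log A) = 1 + X := by
  set g : A⟦X⟧ := (exp A).subst (log A)
  have hode : (1 + X) * d⁄dX A g = g := by
    rw [derivative_subst HasSubst.log, derivative_exp, mul_left_comm,
      one_add_X_mul_derivative_log, mul_one]
  have h0 : constantCoeff g = 1 := by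
    rw [← coeff_zero_eq_constantCoeff_apply, coeff_subst' HasSubst.log,
      finsum_eq_single _ 0 fun d hd => by simp [zero_pow hd]]
    simp
  rw [← sub_eq_zero]
  refine eq_zero_of_one_add_X_mul_derivative_eq_self ?_ (by simp [h0])
  simp [mul_sub, hode]

-- At `k = 0` both sides vanish, the right-hand side because `x / 0 = 0`.
theorem algebraMap_coeff_log {K : Type*} [Field K] [CharZero K] (k : ℕ) :
    algebraMap ℚ K (coeff k (log ℚ)) = (-1) ^ (k + 1) / k := by
  rcases k with _ | k <;> simp

end Log

section Nilpotent

variable {R A : Type*} [CommRing R] [Ring A] [Algebra R A] {s : A} {N : ℕ}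

theorem aeval_trunc_coe_of_pow_eq_zero (hs : s ^ N = 0) (p : Polynomial R) :
    Polynomial.aeval s (trunc N (p : R⟦X⟧)) = Polynomial.aeval s p := by
  obtain ⟨q, hq⟩ : Polynomial.X ^ N ∣ p - trunc N (p : R⟦X⟧) :=
    Polynomial.X_pow_dvd_iff.2 fun d hd => by simp [coeff_trunc, hd]
  rw [eq_comm, ← sub_eq_zero, ← map_sub, hq, map_mul, map_pow, Polynomial.aeval_X, hs, zero_mul]

def aevalOfPowEqZero (hs : s ^ N = 0) : R⟦X⟧ →ₐ[R] A :=
  AlgHom.ofLinearMap ((Polynomial.aeval s).toLinearMap ∘ₗ trunc N)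
    (by simpa using aeval_trunc_coe_of_pow_eq_zero hs 1)
    (fun f g => by
      simp only [LinearMap.comp_apply, AlgHom.toLinearMap_apply]
      rw [← trunc_trunc_mul_trunc, ← Polynomial.coe_mul, aeval_trunc_coe_of_pow_eq_zero hs,
        map_mul])

theorem aevalOfPowEqZero_apply (hs : s ^ N = 0) (f : R⟦X⟧) :
    aevalOfPowEqZero hs f = ∑ k ∈ Finset.range N, coeff k f • s ^ k := by
  simp [aevalOfPowEqZero, Polynomial.aeval_def, eval₂_trunc_eq_sum_range, Algebra.smul_def]

theorem aevalOfPowEqZero_coe (hs : s ^ N = 0) (p : Polynomial R) :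
    aevalOfPowEqZero hs (p : R⟦X⟧) = Polynomial.aeval s p :=
  aeval_trunc_coe_of_pow_eq_zero hs p

theorem aevalOfPowEqZero_X (hs : s ^ N = 0) : aevalOfPowEqZero hs (X : R⟦X⟧) = s := by
  simpa using aevalOfPowEqZero_coe hs (R := R) Polynomial.X

theorem aevalOfPowEqZero_pow_eq_zero (hs : s ^ N = 0) {g : R⟦X⟧} (hg : constantCoeff g = 0) :
    aevalOfPowEqZero hs g ^ N = 0 := by
  obtain ⟨g', rfl⟩ := X_dvd_iff.2 hg
  rw [map_mul, ((commute_X g').symm.map _).mul_pow, aevalOfPowEqZero_X, hs, zero_mul]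

theorem aevalOfPowEqZero_subst (hs : s ^ N = 0) {g : R⟦X⟧} (hg : constantCoeff g = 0)
    (f : R⟦X⟧) :
    aevalOfPowEqZero hs (f.subst g) =
      aevalOfPowEqZero (aevalOfPowEqZero_pow_eq_zero hs hg) f := by
  have hsubst := HasSubst.of_constantCoeff_zero' hg
  conv_lhs => rw [eq_X_pow_mul_shift_add_trunc N f]
  rw [subst_add hsubst, subst_mul hsubst, subst_pow hsubst, subst_X hsubst, subst_coe hsubst,
    map_add, map_mul, map_pow, aevalOfPowEqZero_pow_eq_zero hs hg, zero_mul, zero_add]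
  exact (Polynomial.aeval_algHom_apply _ _ _).symm

end Nilpotent

end PowerSeries

namespace NormedSpace

variable {A : Type*} [Ring A] [Algebra ℚ A] [TopologicalSpace A] [IsTopologicalRing A]
  {s : A} {N : ℕ}

theorem exp_eq_aevalOfPowEqZero_exp (hs : s ^ N = 0) :
    exp s = aevalOfPowEqZero hs (PowerSeries.exp ℚ) := by
  rw [congrFun exp_eq_tsum_rat s, aevalOfPowEqZero_apply,
    tsum_eq_sum (s := Finset.range N) fun m hm => by
      rw [pow_eq_zero_of_le (by simpa using hm) hs, smul_zero]]
  simp [coeff_exp]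

theorem exp_aevalOfPowEqZero_log (hs : s ^ N = 0) :
    exp (aevalOfPowEqZero hs (log ℚ)) = 1 + s := by
  rw [exp_eq_aevalOfPowEqZero_exp (aevalOfPowEqZero_pow_eq_zero hs constantCoeff_log),
    ← aevalOfPowEqZero_subst _ constantCoeff_log, exp_subst_log, map_add, map_one,
    aevalOfPowEqZero_X]

end NormedSpace

namespace Matrix

section Kronecker

variable {m n 𝕜 : Type*} [Fintype m] [DecidableEq m] [Fintype n] [DecidableEq n] [RCLike 𝕜]

variable (m n 𝕜) in
def kroneckerOneRingHom : Matrix m m 𝕜 →+* Matrix (m × n) (m × n) 𝕜 where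
  toFun A := A ⊗ₖ 1
  map_one' := one_kronecker_one
  map_mul' A B := by rw [← mul_kronecker_mul, mul_one]
  map_zero' := zero_kronecker _
  map_add' A B := add_kronecker _ _ _

variable (m n 𝕜) in
def oneKroneckerRingHom : Matrix n n 𝕜 →+* Matrix (m × n) (m × n) 𝕜 where
  toFun B := 1 ⊗ₖ B
  map_one' := one_kronecker_one
  map_mul' A B := by rw [← mul_kronecker_mul, mul_one]
  map_zero' := kronecker_zero _
  map_add' A B := kronecker_add _ _ _

section Operator

open scoped Norms.Operator

theorem exp_kronecker_one (A : Matrix m m 𝕜) :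
    NormedSpace.exp (A ⊗ₖ (1 : Matrix n n 𝕜)) = NormedSpace.exp A ⊗ₖ 1 :=
  (NormedSpace.map_exp (kroneckerOneRingHom m n 𝕜)
    (continuous_matrix fun _ _ => (continuous_id.matrix_elem _ _).mul continuous_const) A).symm

theorem exp_one_kronecker (B : Matrix n n 𝕜) :
    NormedSpace.exp ((1 : Matrix m m 𝕜) ⊗ₖ B) = 1 ⊗ₖ NormedSpace.exp B :=
  (NormedSpace.map_exp (oneKroneckerRingHom m n 𝕜)
    (continuous_matrix fun _ _ => continuous_const.mul (continuous_id.matrix_elem _ _)) B).symm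

end Operator

theorem exp_kronecker_one_add_one_kronecker (A : Matrix m m 𝕜) (B : Matrix n n 𝕜) :
    NormedSpace.exp (A ⊗ₖ 1 + 1 ⊗ₖ B) = NormedSpace.exp A ⊗ₖ NormedSpace.exp B := by
  have hcomm : Commute (A ⊗ₖ (1 : Matrix n n 𝕜)) ((1 : Matrix m m 𝕜) ⊗ₖ B) := by
    simp only [Commute, SemiconjBy, ← mul_kronecker_mul, mul_one, one_mul]
  rw [exp_add_of_commute _ _ hcomm, exp_kronecker_one, exp_one_kronecker, ← mul_kronecker_mul,
    mul_one, one_mul]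

end Kronecker

section Shift

variable (R : Type*) [Semiring R] (n : ℕ) in
def shiftMatrix : Matrix (Fin n) (Fin n) R := of fun i j => if (j : ℕ) = i + 1 then 1 else 0

variable {R : Type*} [Semiring R] {n : ℕ}

theorem shiftMatrix_pow_apply (k : ℕ) (i j : Fin n) :
    (shiftMatrix R n ^ k) i j = if (j : ℕ) = i + k then 1 else 0 := by
  induction k generalizing j with
  | zero => simp [one_apply, Fin.ext_iff, eq_comm]
  | succ k ih =>
    rw [pow_succ, mul_apply]
    simp_rw [ih, shiftMatrix, of_apply, ite_mul, one_mul, zero_mul]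
    rw [Fin.sum_univ_eq_sum_range
      (fun l => if l = i + k then if (j : ℕ) = l + 1 then 1 else 0 else 0), Finset.sum_ite_eq']
    split_ifs <;> simp_all <;> omega

theorem shiftMatrix_pow_self : shiftMatrix R n ^ n = 0 := by
  ext i j
  rw [shiftMatrix_pow_apply, if_neg (by omega), zero_apply]

theorem aevalOfPowEqZero_shiftMatrix_apply {K R : Type*} [CommRing K] [Ring R] [Algebra K R]
    (f : K⟦X⟧) (i j : Fin n) :
    aevalOfPowEqZero (A := Matrix (Fin n) (Fin n) R) shiftMatrix_pow_self f i j =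
      if i ≤ j then algebraMap K R (coeff ((j : ℕ) - i) f) else 0 := by
  simp only [aevalOfPowEqZero_apply, sum_apply, smul_apply, shiftMatrix_pow_apply, smul_ite,
    smul_zero, Algebra.algebraMap_eq_smul_one]
  split_ifs with h <;> rw [Fin.le_def] at h
  · rw [Finset.sum_eq_single_of_mem ((j : ℕ) - i) (by simp; omega) fun k _ hk => if_neg (by omega),
      if_pos (by omega)]
  · exact Finset.sum_eq_zero fun k _ => if_neg (by omega)

end Shift

end Matrix

theorem Jord_eq_one_add_shiftMatrix (n : ℕ) : Jord n = 1 + shiftMatrix ℂ n := by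
  ext i j
  simp only [Jord, shiftMatrix, of_apply, Matrix.add_apply, one_apply, Fin.ext_iff]
  split_ifs <;> first | omega | norm_num

def logJord (n : ℕ) : Matrix (Fin n) (Fin n) ℂ :=
  aevalOfPowEqZero shiftMatrix_pow_self (log ℚ)

theorem logJord_apply {n : ℕ} (i j : Fin n) :
    logJord n i j = if i ≤ j then (-1) ^ ((j : ℕ) - i + 1) / (((j : ℕ) - i : ℕ) : ℂ) else 0 := by
  rw [logJord, aevalOfPowEqZero_shiftMatrix_apply, algebraMap_coeff_log]

theorem exp_logJord (n : ℕ) : NormedSpace.exp (logJord n) = Jord n := by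
  rw [logJord, NormedSpace.exp_aevalOfPowEqZero_log, Jord_eq_one_add_shiftMatrix]

theorem Ablock_zero (n : ℕ) : Ablock n 0 = -(logJord n)ᵀ := by
  ext i j
  simp only [Ablock, if_true, of_apply, Matrix.neg_apply, transpose_apply, logJord_apply,
    Fin.le_def]
  split_ifs
  · rw [pow_succ]; ring
  · omega
  · simp [show (i : ℕ) - j = 0 by omega]
  · simp

theorem Ablock_of_ne_zero {n k : ℕ} (hk : k ≠ 0) :
    Ablock n k = ((-1) ^ (k + 1) / k : ℂ) • 1 := by
  rw [Ablock, if_neg hk, pow_succ]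
  ring_nf

theorem Nmat_eq (n : ℕ) : Nmat n = logJord n ⊗ₖ 1 + 1 ⊗ₖ (-(logJord n)ᵀ) := by
  ext ⟨p, i⟩ ⟨q, j⟩
  simp only [Nmat, of_apply, Matrix.add_apply, kroneckerMap_apply, logJord_apply, ← Fin.le_def]
  rcases lt_trichotomy p q with h | rfl | h
  · rw [if_pos h.le, if_pos h.le, Ablock_of_ne_zero (by omega), one_apply_ne h.ne]
    simp [one_apply]
  · simp [Ablock_zero, logJord_apply]
  · rw [if_neg h.not_ge, if_neg h.not_ge, one_apply_ne h.ne']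
    simp

theorem Jord_kronecker_exp_general (n : ℕ) :
    Jord n ⊗ₖ ((Jord n)⁻¹)ᵀ = NormedSpace.exp (Nmat n) := by
  rw [Nmat_eq, exp_kronecker_one_add_one_kronecker, ← transpose_neg, exp_transpose,
    Matrix.exp_neg, exp_logJord]

/-- J ⊗ J̃ = exp(N), where J̃ = (J⁻¹)ᵗ and (C ⊗ D̃)((i,p),(j,q)) = C i j · D̃ p q. -/
theorem Jord_kronecker_exp (n : ℕ) (hn : 1 ≤ n) :
    Jord n ⊗ₖ ((Jord n)⁻¹)ᵀ = NormedSpace.exp (Nmat n) :=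
  Jord_kronecker_exp_general n
end
end

section
/- Let n ≥ 1 and let N ∈ Mat_{n²×n²}(ℂ) be built from the blocks A₀, …, A_{n−1} as in the definition below. Then for every r ∈ ℕ, the power N^r is block upper-triangular and block-Toeplitz: its (p,q)-block (1 ≤ p, q ≤ n) equals N_{q−p}^{(r)} if q ≥ p and 0 otherwise, where for 0 ≤ i ≤ n−1, N_i^{(r)} = Σ_{k=0}^{r} binom(r,k) · A₀^{r−k} · Σ_{s ∈ S_i^k} Π_{l=0}^{k−1} A_{s_l − s_{l+1}}, with S_i^k = {(s_0, …, s_k) ∈ ℕ^{k+1} : s_0 = i, s_k = 0, s_{j+1} < s_j for 0 ≤ j ≤ k−1} (the empty product for k = 0 equals the identity matrix). -/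
open Complex Matrix
open scoped TensorProduct

noncomputable section

open Fin.NatCast in
/-- The block N_i^{(r)} = Σ_{k=0}^r binom(r,k)·A₀^{r−k}·Σ_{s ∈ S_i^k} Π_{l=0}^{k−1}
A_{s_l − s_{l+1}}, where S_i^k is the set of strictly decreasing (k+1)-tuples from i to 0. -/
def Nblk (n i r : ℕ) : Matrix (Fin n) (Fin n) ℂ :=
  ∑ k ∈ Finset.range (r + 1), (r.choose k : ℂ) •
    ((Ablock n 0) ^ (r - k) *
      ∑ s ∈ (Finset.univ.filter fun s : Fin (k + 1) → Fin (i + 1) =>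
          ((s 0 : ℕ) = i) ∧ ((s (Fin.last k) : ℕ) = 0) ∧
          ∀ j : Fin k, (s j.succ : ℕ) < (s j.castSucc : ℕ)),
        ((List.range k).map fun l =>
          Ablock n ((s (l : Fin (k + 1)) : ℕ) - (s (((l + 1 : ℕ)) : Fin (k + 1)) : ℕ))).prod)

/-!
The map sending a power series with matrix coefficients to the upper triangular block-Toeplitz
matrix of its first `m` coefficients is multiplicative: block-Toeplitz multiplication is the
Cauchy product truncated at `X ^ m`. `N` is the image of `F = ∑ A_d X ^ d`, so the `(p, q)`-block
of `N ^ r` is the coefficient of `X ^ (q - p)` in `F ^ r`. As `A_d = -a_d • 1` for `d ≥ 1`,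
`F = A₀ + L • 1` with `L = log (1 + X)` a scalar series, which commutes with `A₀`; the binomial
theorem gives `F ^ r = ∑ binom(r, k) A₀ ^ (r - k) L ^ k`, and the coefficient of `X ^ i` in `L ^ k`
is the sum over the decreasing paths `s ∈ S_i^k` of the products of the coefficients of the steps.
-/

open Finset PowerSeries

theorem Fin.sum_ite_le_le_eq_sum_antidiagonal {M : Type*} [AddCommMonoid M] {m : ℕ}
    (p q : Fin m) (φ : ℕ → ℕ → M) :
    ∑ t : Fin m, (if (p : ℕ) ≤ t ∧ (t : ℕ) ≤ q then φ (t - p) (q - t) else 0) =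
      if (p : ℕ) ≤ q then ∑ x ∈ antidiagonal ((q : ℕ) - p), φ x.1 x.2 else 0 := by
  rw [Fin.sum_univ_eq_sum_range
    (fun t => if (p : ℕ) ≤ t ∧ t ≤ (q : ℕ) then φ (t - p) (q - t) else 0), ← sum_filter]
  split_ifs with hpq
  · have hIco : (range m).filter (fun t => (p : ℕ) ≤ t ∧ t ≤ q) = Ico (p : ℕ) (q + 1) := by
      ext t; simp only [mem_filter, mem_range, mem_Ico]; omega
    rw [hIco, sum_Ico_eq_sum_range, Nat.sum_antidiagonal_eq_sum_range_succ φ,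
      show (q : ℕ) + 1 - p = ((q : ℕ) - (p : ℕ)).succ by omega]
    refine sum_congr rfl fun v _ => ?_
    congr 1 <;> omega
  · refine sum_eq_zero fun t ht => ?_
    simp only [mem_filter] at ht
    omega

section BlockToeplitz

variable {ι R : Type*} [Fintype ι] [DecidableEq ι] [Semiring R]

def blockToeplitz (m : ℕ) : (Matrix ι ι R)⟦X⟧ →* Matrix (Fin m × ι) (Fin m × ι) R where
  toFun f := of fun a b => if (a.1 : ℕ) ≤ b.1 then coeff (b.1 - a.1 : ℕ) f a.2 b.2 else 0
  map_one' := by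
    ext ⟨p, i⟩ ⟨q, j⟩
    simp only [of_apply, coeff_one, Matrix.one_apply, Prod.mk.injEq]
    rcases eq_or_ne p q with rfl | hpq
    · simp [Matrix.one_apply]
    · split_ifs with h₁ h₂ <;> first | rfl | exact absurd (Fin.ext (by omega)) hpq
  map_mul' f g := by
    ext ⟨p, i⟩ ⟨q, j⟩
    simp only [of_apply, Matrix.mul_apply, Fintype.sum_prod_type, coeff_mul, Matrix.sum_apply]
    calc _ = ∑ t : Fin m, if (p : ℕ) ≤ t ∧ (t : ℕ) ≤ q then
              ∑ l, coeff ((t : ℕ) - p) f i l * coeff ((q : ℕ) - t) g l j else 0 :=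
          (Fin.sum_ite_le_le_eq_sum_antidiagonal p q
            fun a b => ∑ l, coeff a f i l * coeff b g l j).symm
      _ = _ := sum_congr rfl fun t _ => by split_ifs <;> simp_all

theorem blockToeplitz_apply (m : ℕ) (f : (Matrix ι ι R)⟦X⟧) (a b : Fin m × ι) :
    blockToeplitz m f a b = if (a.1 : ℕ) ≤ b.1 then coeff (b.1 - a.1 : ℕ) f a.2 b.2 else 0 :=
  rfl

end BlockToeplitz

-- An `abbrev`, so that `rw` recognises it inside `Nblk`.
abbrev decreasingPaths (k i m : ℕ) : Finset (Fin (k + 1) → Fin (m + 1)) :=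
  univ.filter fun s => ((s 0 : ℕ) = i) ∧ ((s (Fin.last k) : ℕ) = 0) ∧
    ∀ j : Fin k, (s j.succ : ℕ) < (s j.castSucc : ℕ)

@[simp]
theorem mem_decreasingPaths {k i m : ℕ} {s : Fin (k + 1) → Fin (m + 1)} :
    s ∈ decreasingPaths k i m ↔ (s 0 : ℕ) = i ∧ (s (Fin.last k) : ℕ) = 0 ∧
      ∀ j : Fin k, (s j.succ : ℕ) < (s j.castSucc : ℕ) := by
  simp [decreasingPaths]

theorem sum_decreasingPaths_succ {M : Type*} [AddCommMonoid M] {k i m : ℕ} (hi : i ≤ m)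
    (g : (Fin (k + 2) → Fin (m + 1)) → M) :
    ∑ s ∈ decreasingPaths (k + 1) i m, g s =
      ∑ v ∈ range i, ∑ t ∈ decreasingPaths k v m, g (Fin.cons ⟨i, by omega⟩ t) := by
  have hcons : ∀ s ∈ decreasingPaths (k + 1) i m, Fin.cons ⟨i, by omega⟩ (Fin.tail s) = s := by
    intro s hs
    have h0 : s 0 = ⟨i, by omega⟩ := Fin.ext (mem_decreasingPaths.1 hs).1
    rw [← h0, Fin.cons_self_tail]
  rw [sum_sigma']
  refine sum_nbij' (fun s => ⟨s 1, Fin.tail s⟩) (fun x => Fin.cons ⟨i, by omega⟩ x.2)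
    ?_ ?_ hcons ?_ fun s hs => by rw [hcons s hs]
  · intro s hs
    simp only [mem_decreasingPaths, Fin.forall_fin_succ] at hs
    obtain ⟨h0, hlast, h1, hrest⟩ := hs
    simp only [mem_sigma, mem_range, mem_decreasingPaths]
    refine ⟨?_, rfl, ?_, fun j => ?_⟩
    · simpa [h0] using h1
    · simpa [Fin.tail, Fin.succ_last] using hlast
    · simpa only [Fin.tail, Fin.succ_castSucc] using hrest j
  · rintro ⟨v, t⟩ ht
    simp only [mem_sigma, mem_range, mem_decreasingPaths] at ht
    obtain ⟨hv, h0, hlast, hrest⟩ := ht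
    simp only [mem_decreasingPaths, Fin.forall_fin_succ]
    refine ⟨rfl, ?_, ?_, fun j => ?_⟩
    · simpa [← Fin.succ_last] using hlast
    · simpa [h0] using hv
    · simpa only [← Fin.succ_castSucc, Fin.cons_succ] using hrest j
  · rintro ⟨v, t⟩ ht
    simp only [mem_sigma, mem_range, mem_decreasingPaths] at ht
    simp [ht.2.1]

theorem coeff_pow_eq_sum_decreasingPaths {R : Type*} [CommSemiring R] {f : R⟦X⟧}
    (hf : constantCoeff f = 0) (k : ℕ) {i m : ℕ} (hi : i ≤ m) :
    coeff i (f ^ k) =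
      ∑ s ∈ decreasingPaths k i m, ∏ l : Fin k, coeff ((s l.castSucc : ℕ) - s l.succ) f := by
  induction k generalizing i with
  | zero =>
    simp only [pow_zero, coeff_one, univ_eq_empty, prod_empty]
    rcases eq_or_ne i 0 with rfl | hi0
    · have : decreasingPaths 0 0 m = {0} := by
        ext s
        simp only [mem_decreasingPaths, mem_singleton, Fin.last_zero, IsEmpty.forall_iff, and_true]
        constructor
        · rintro ⟨h, -⟩
          funext j
          rw [Fin.fin_one_eq_zero j]
          exact Fin.ext h
        · rintro rfl
          simp
      rw [if_pos rfl, this, sum_singleton]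
    · have : decreasingPaths 0 i m = ∅ := by
        ext s
        simp only [mem_decreasingPaths, Fin.last_zero, notMem_empty, iff_false]
        omega
      rw [if_neg hi0, this, sum_empty]
  | succ k ih =>
    rw [pow_succ', coeff_mul, ← Nat.sum_antidiagonal_swap,
      Nat.sum_antidiagonal_eq_sum_range_succ_mk, sum_range_succ, sum_decreasingPaths_succ hi]
    simp only [Prod.fst_swap, Prod.snd_swap, Nat.sub_self, coeff_zero_eq_constantCoeff_apply, hf,
      zero_mul, add_zero]
    refine sum_congr rfl fun v hv => ?_
    rw [ih ((mem_range.1 hv).le.trans hi), mul_sum]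
    refine sum_congr rfl fun t ht => ?_
    simp only [Fin.prod_univ_succ, Fin.castSucc_zero, Fin.cons_zero, Fin.cons_succ,
      ← Fin.succ_castSucc, (mem_decreasingPaths.1 ht).1]

theorem PowerSeries.commute_map_algebraMap_C {R A : Type*} [CommSemiring R] [Semiring A]
    [Algebra R A] (g : R⟦X⟧) (a : A) : Commute (map (algebraMap R A) g) (C a) := by
  ext d
  simp [Algebra.commutes]

-- As in `Nblk`, `l` is elaborated in `Fin (k + 1)`: the list `List.range k` is coerced, not `l`.
open Fin.NatCast in
theorem List.map_range_natCast_eq_ofFn {α : Type*} (k : ℕ) (h : Fin (k + 1) → Fin (k + 1) → α) :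
    (List.range k).map (fun l => h (l : Fin (k + 1)) ((l + 1 : ℕ) : Fin (k + 1))) =
      List.ofFn fun l : Fin k => h l.castSucc l.succ := by
  simp only [List.bind_eq_flatMap, List.pure_def, ← List.map_eq_flatMap,
    ← List.map_coe_finRange_eq_range, List.map_map, List.ofFn_eq_map]
  refine List.map_congr_left fun l _ => ?_
  simp [Fin.coe_eq_castSucc]

-- The series of `log (1 + X)`; at `d = 0` the junk value `x / 0 = 0` gives the constant term `0`.
def logOneAddSeries : ℂ⟦X⟧ := mk fun d => -((-1 : ℂ) ^ d / d)

theorem constantCoeff_logOneAddSeries : constantCoeff logOneAddSeries = 0 := by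
  simp [logOneAddSeries, ← coeff_zero_eq_constantCoeff_apply]

theorem Ablock_of_ne_zero_s19 (n : ℕ) {d : ℕ} (hd : d ≠ 0) :
    Ablock n d = algebraMap ℂ _ (coeff d logOneAddSeries) := by
  simp [Ablock, hd, logOneAddSeries, Algebra.algebraMap_eq_smul_one]

def blockSeries (n : ℕ) : (Matrix (Fin n) (Fin n) ℂ)⟦X⟧ := mk (Ablock n)

theorem Nmat_eq_blockToeplitz (n : ℕ) : Nmat n = blockToeplitz n (blockSeries n) := by
  ext
  simp [Nmat, blockToeplitz, blockSeries]

theorem blockSeries_eq (n : ℕ) :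
    blockSeries n = PowerSeries.map (algebraMap ℂ _) logOneAddSeries + C (Ablock n 0) := by
  ext d : 1
  rw [map_add, coeff_map, coeff_C, blockSeries, coeff_mk]
  rcases eq_or_ne d 0 with rfl | hd
  · simp [constantCoeff_logOneAddSeries]
  · rw [if_neg hd, add_zero, Ablock_of_ne_zero_s19 n hd]

open Fin.NatCast in
theorem sum_decreasingPaths_prod_Ablock (n k i m : ℕ) (hi : i ≤ m) :
    ∑ s ∈ decreasingPaths k i m, ((List.range k).map fun l =>
        Ablock n ((s (l : Fin (k + 1)) : ℕ) - (s (((l + 1 : ℕ)) : Fin (k + 1)) : ℕ))).prod =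
      algebraMap ℂ _ (coeff i (logOneAddSeries ^ k)) := by
  rw [coeff_pow_eq_sum_decreasingPaths constantCoeff_logOneAddSeries k hi, map_sum]
  refine sum_congr rfl fun s hs => ?_
  rw [List.map_range_natCast_eq_ofFn k fun a b => Ablock n ((s a : ℕ) - s b),
    ← List.prod_ofFn, map_list_prod, List.map_ofFn]
  congr 2
  funext l
  have := (mem_decreasingPaths.1 hs).2.2 l
  exact Ablock_of_ne_zero_s19 n (by omega)

theorem coeff_blockSeries_pow (n i r : ℕ) : coeff i (blockSeries n ^ r) = Nblk n i r := by
  rw [blockSeries_eq, (commute_map_algebraMap_C _ _).add_pow, map_sum, Nblk]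
  refine sum_congr rfl fun k _ => ?_
  rw [sum_decreasingPaths_prod_Ablock n k i i le_rfl, ← map_pow, ← map_pow, ← map_natCast C,
    coeff_mul_C, coeff_mul_C, coeff_map, Algebra.commutes, Nat.cast_smul_eq_nsmul, nsmul_eq_mul,
    Nat.cast_comm]

theorem Nmat_pow_block_formula_general (n : ℕ) (r : ℕ) (p q i j : Fin n) :
    ((Nmat n) ^ r) (p, i) (q, j) =
      if (p : ℕ) ≤ (q : ℕ) then Nblk n ((q : ℕ) - (p : ℕ)) r i j else 0 := by
  rw [Nmat_eq_blockToeplitz, ← map_pow, blockToeplitz_apply, coeff_blockSeries_pow]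

/-- N^r is block upper-triangular and block-Toeplitz, with (p,q)-block N_{q−p}^{(r)}. -/
theorem Nmat_pow_block_formula (n : ℕ) (hn : 1 ≤ n) (r : ℕ) (p q i j : Fin n) :
    ((Nmat n) ^ r) (p, i) (q, j) =
      if (p : ℕ) ≤ (q : ℕ) then Nblk n ((q : ℕ) - (p : ℕ)) r i j else 0 :=
  Nmat_pow_block_formula_general n r p q i j
end
end
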